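/- arXiv:2306.14037 — 3 statements merged into one kernel-verified Lean document; each statement's English description precedes it below -/
import Mathlib

section
/- For a closed convex set S in R^n and points x1, x2 in S, the directional projection satisfies (x1 - x2)^T Π_S(x1, v) ≤ (x1 - x2)^T v for all v in R^n, where Π_S(x, v) = lim_{ξ→0+} (P_S(x + ξv) - x)/ξ and P_S denotes Euclidean projection onto S. -/
/-!
Write `y = x1 + ξ v` and `p = P y`. The variational inequality of the nearest point gives
`⟪y - p, x2 - p⟫ ≤ 0`; dividing by `ξ > 0` this reads `⟪v - ξ⁻¹ (p - x1), x2 - p⟫ ≤ 0`.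
As `ξ → 0⁺` the difference quotient tends to `Π_S(x1, v)` and hence `p → x1`, so in the limit
`⟪v - Π_S(x1, v), x2 - x1⟫ ≤ 0`, which is the claim.
-/

open Filter Topology
open scoped RealInnerProductSpace

section

variable {E : Type*} [NormedAddCommGroup E]

theorem Convex.inner_sub_nearest_nonpos [InnerProductSpace ℝ E] {S : Set E} (hS : Convex ℝ S)
    {y p : E} (hp : p ∈ S) (hmin : ∀ w ∈ S, ‖y - p‖ ≤ ‖y - w‖) {w : E} (hw : w ∈ S) :
    ⟪y - p, w - p⟫ ≤ 0 := by
  have hbdd : BddBelow (Set.range fun z : S => ‖y - z‖) :=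
    ⟨0, by rintro _ ⟨z, rfl⟩; exact norm_nonneg _⟩
  have hinf : ‖y - p‖ = ⨅ z : S, ‖y - z‖ :=
    le_antisymm (@le_ciInf _ _ _ ⟨⟨p, hp⟩⟩ _ _ fun z => hmin z z.2) (ciInf_le hbdd ⟨p, hp⟩)
  exact (norm_eq_iInf_iff_real_inner_le_zero hS hp).1 hinf w hw

theorem tendsto_of_tendsto_inv_smul_sub [NormedSpace ℝ E] {g : ℝ → E} {x L : E}
    (h : Tendsto (fun ξ : ℝ => ξ⁻¹ • (g ξ - x)) (𝓝[>] 0) (𝓝 L)) :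
    Tendsto g (𝓝[>] 0) (𝓝 x) := by
  have hξ : Tendsto (fun ξ : ℝ => ξ) (𝓝[>] 0) (𝓝 0) := tendsto_nhdsWithin_of_tendsto_nhds tendsto_id
  have hlim := (hξ.smul h).const_add x
  rw [zero_smul, add_zero] at hlim
  refine hlim.congr' ?_
  filter_upwards [self_mem_nhdsWithin] with ξ (hξ : 0 < ξ)
  rw [smul_inv_smul₀ hξ.ne', add_sub_cancel]

theorem sub_inv_smul_sub_eq [Module ℝ E] {ξ : ℝ} (hξ : ξ ≠ 0) (x q v : E) :
    v - ξ⁻¹ • (q - x) = ξ⁻¹ • (x + ξ • v - q) := by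
  rw [smul_sub, smul_sub, smul_add, inv_smul_smul₀ hξ]
  abel

end

theorem stmt0_general {n : ℕ} (S : Set (EuclideanSpace ℝ (Fin n)))
    (hconv : Convex ℝ S)
    (P : EuclideanSpace ℝ (Fin n) → EuclideanSpace ℝ (Fin n))
    (hP : ∀ y, P y ∈ S ∧ ∀ w ∈ S, ‖y - P y‖ ≤ ‖y - w‖)
    (x1 x2 : EuclideanSpace ℝ (Fin n)) (hx2 : x2 ∈ S)
    (v PiS : EuclideanSpace ℝ (Fin n))
    (hPi : Filter.Tendsto (fun ξ : ℝ => ξ⁻¹ • (P (x1 + ξ • v) - x1))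
      (nhdsWithin 0 (Set.Ioi 0)) (nhds PiS)) :
    ⟪x1 - x2, PiS⟫ ≤ ⟪x1 - x2, v⟫ := by
  have hlim : Tendsto (fun ξ : ℝ => ⟪v - ξ⁻¹ • (P (x1 + ξ • v) - x1), x2 - P (x1 + ξ • v)⟫)
      (𝓝[>] 0) (𝓝 ⟪v - PiS, x2 - x1⟫) :=
    (tendsto_const_nhds.sub hPi).inner
      (tendsto_const_nhds.sub (tendsto_of_tendsto_inv_smul_sub hPi))
  have hvar : ∀ᶠ ξ : ℝ in 𝓝[>] 0,
      ⟪v - ξ⁻¹ • (P (x1 + ξ • v) - x1), x2 - P (x1 + ξ • v)⟫ ≤ 0 := by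
    filter_upwards [self_mem_nhdsWithin] with ξ (hξ : 0 < ξ)
    rw [sub_inv_smul_sub_eq hξ.ne', real_inner_smul_left]
    exact mul_nonpos_of_nonneg_of_nonpos (inv_nonneg.2 hξ.le)
      (hconv.inner_sub_nearest_nonpos (hP _).1 (hP _).2 hx2)
  have hle : ⟪v - PiS, x2 - x1⟫ ≤ 0 := le_of_tendsto hlim hvar
  have hswap : ⟪v - PiS, x2 - x1⟫ = ⟪x1 - x2, PiS⟫ - ⟪x1 - x2, v⟫ := by
    rw [real_inner_comm, ← neg_sub x1 x2, inner_neg_left, inner_sub_right, neg_sub]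
  linarith

/-- Projection inequality for the directional projection onto a closed convex set. -/
theorem stmt0 {n : ℕ} (S : Set (EuclideanSpace ℝ (Fin n)))
    (hclosed : IsClosed S) (hconv : Convex ℝ S)
    (P : EuclideanSpace ℝ (Fin n) → EuclideanSpace ℝ (Fin n))
    (hP : ∀ y, P y ∈ S ∧ ∀ w ∈ S, ‖y - P y‖ ≤ ‖y - w‖)
    (x1 x2 : EuclideanSpace ℝ (Fin n)) (hx1 : x1 ∈ S) (hx2 : x2 ∈ S)
    (v PiS : EuclideanSpace ℝ (Fin n))
    (hPi : Filter.Tendsto (fun ξ : ℝ => ξ⁻¹ • (P (x1 + ξ • v) - x1))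
      (nhdsWithin 0 (Set.Ioi 0)) (nhds PiS)) :
    ⟪x1 - x2, PiS⟫ ≤ ⟪x1 - x2, v⟫ :=
  stmt0_general S hconv P hP x1 x2 hx2 v PiS hPi
end

section
/- Let G be a connected undirected graph on N nodes, g_i ∈ R^q with ||g_i|| ≤ K_g for each i, ∑_{i=1}^N g_i ≤ 0 componentwise, and μ_1,...,μ_N ∈ R^q nonnegative. If K_μ ≥ N·K_g, then ∑_{i=1}^N μ_i^T g_i ≤ K_μ · (1/2)∑_{i=1}^N ∑_{j=1}^N a_{ij}||μ_i - μ_j||₁, i.e., φ(μ) - K_μ h(μ) ≤ 0. -/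
open scoped RealInnerProductSpace

/-- The 1-norm on `EuclideanSpace ℝ (Fin q)`. -/
noncomputable def norm1 {q : ℕ} (x : EuclideanSpace ℝ (Fin q)) : ℝ := ∑ k, |x k|

/-- Symmetric edge weight `|f u - f v|` as a function on `Sym2`. -/
noncomputable def edgeW {V : Type*} (f : V → ℝ) : Sym2 V → ℝ :=
  Sym2.lift ⟨fun u v => |f u - f v|, fun u v => by dsimp only; rw [abs_sub_comm]⟩

lemma edgeW_mk {V : Type*} (f : V → ℝ) (u v : V) : edgeW f s(u, v) = |f u - f v| := rfl

lemma edgeW_nonneg {V : Type*} (f : V → ℝ) (e : Sym2 V) : 0 ≤ edgeW f e := by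
  induction e using Sym2.ind with
  | _ u v => exact abs_nonneg _

lemma walk_abs_le {V : Type*} {G : SimpleGraph V} (f : V → ℝ) {i j : V} (w : G.Walk i j) :
    |f i - f j| ≤ (w.edges.map (edgeW f)).sum := by
  induction w with
  | nil => simp
  | cons h w ih =>
    rename_i u v x
    calc |f u - f x| ≤ |f u - f v| + |f v - f x| := abs_sub_le _ _ _
    _ ≤ _ := by
      simp only [SimpleGraph.Walk.edges_cons, List.map_cons, List.sum_cons, edgeW_mk]
      linarith

lemma reach_abs_le {V : Type*} [Fintype V] [DecidableEq V] {G : SimpleGraph V}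
    [DecidableRel G.Adj] (f : V → ℝ) {i j : V} (h : G.Reachable i j) :
    |f i - f j| ≤ ∑ e ∈ G.edgeFinset, edgeW f e := by
  obtain ⟨w⟩ := h
  set p := w.toPath with hp
  calc |f i - f j| ≤ (p.1.edges.map (edgeW f)).sum := walk_abs_le f p.1
  _ = ∑ e ∈ p.1.edges.toFinset, edgeW f e :=
      (List.sum_toFinset _ p.2.isTrail.edges_nodup).symm
  _ ≤ ∑ e ∈ G.edgeFinset, edgeW f e := by
      refine Finset.sum_le_sum_of_subset_of_nonneg (fun e he => ?_)
        (fun e _ _ => edgeW_nonneg f e)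
      rw [SimpleGraph.mem_edgeFinset]
      exact p.1.edges_subset_edgeSet (List.mem_toFinset.mp he)

lemma doubleSum_eq {V : Type*} [Fintype V] [DecidableEq V] (G : SimpleGraph V)
    [DecidableRel G.Adj] (f : V → ℝ) :
    ∑ i, ∑ j, (if G.Adj i j then (1:ℝ) else 0) * |f i - f j|
      = 2 * ∑ e ∈ G.edgeFinset, edgeW f e := by
  have h1 : ∑ i, ∑ j, (if G.Adj i j then (1:ℝ) else 0) * |f i - f j|
      = ∑ p ∈ Finset.univ.filter (fun p : V × V => G.Adj p.1 p.2), |f p.1 - f p.2| := by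
    rw [Finset.sum_filter, ← Finset.univ_product_univ, Finset.sum_product]
    simp [ite_mul]
  have hmaps : ∀ p ∈ Finset.univ.filter (fun p : V × V => G.Adj p.1 p.2),
      s(p.1, p.2) ∈ G.edgeFinset := by
    intro p hp
    rw [Finset.mem_filter] at hp
    rw [SimpleGraph.mem_edgeFinset]
    exact hp.2
  rw [h1, ← Finset.sum_fiberwise_of_maps_to hmaps, Finset.mul_sum]
  refine Finset.sum_congr rfl fun e he => ?_
  rw [SimpleGraph.mem_edgeFinset] at he
  induction e using Sym2.ind with
  | _ u v =>
    rw [SimpleGraph.mem_edgeSet] at he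
    have hne : u ≠ v := he.ne
    have hset : ((Finset.univ.filter (fun p : V × V => G.Adj p.1 p.2)).filter
        (fun p => s(p.1, p.2) = s(u, v))) = {(u, v), (v, u)} := by
      ext p
      simp only [Finset.mem_filter, Finset.mem_univ, true_and, Finset.mem_insert,
        Finset.mem_singleton, Sym2.eq_iff]
      constructor
      · rintro ⟨_, (⟨rfl, rfl⟩ | ⟨rfl, rfl⟩)⟩
        · left; rfl
        · right; rfl
      · rintro (rfl | rfl)
        · exact ⟨he, Or.inl ⟨rfl, rfl⟩⟩
        · exact ⟨he.symm, Or.inr ⟨rfl, rfl⟩⟩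
    rw [hset, Finset.sum_pair (by simp [hne, hne.symm, Prod.ext_iff])]
    rw [edgeW_mk, abs_sub_comm (f v) (f u)]
    ring

lemma key_coord {V : Type*} [Fintype V] [DecidableEq V] [Nonempty V] {G : SimpleGraph V}
    [DecidableRel G.Adj] (hconn : G.Connected) (f gk : V → ℝ) {Kg Kμ : ℝ}
    (hf : ∀ i, 0 ≤ f i) (hgk : ∀ i, gk i ≤ Kg) (hgsum : ∑ i, gk i ≤ 0)
    (hKg0 : 0 ≤ Kg) (hK : (Fintype.card V : ℝ) * Kg ≤ Kμ) :
    ∑ i, f i * gk i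
      ≤ Kμ * ((1/2) * ∑ i, ∑ j, (if G.Adj i j then (1:ℝ) else 0) * |f i - f j|) := by
  obtain ⟨i0, -, hmin⟩ := Finset.exists_min_image Finset.univ f
    ⟨Classical.arbitrary V, Finset.mem_univ _⟩
  set m := f i0 with hm
  set S := ∑ e ∈ G.edgeFinset, edgeW f e with hS
  have hS0 : 0 ≤ S := Finset.sum_nonneg fun e _ => edgeW_nonneg f e
  have hfm : ∀ i, f i - m ≤ S := by
    intro i
    have h1 := reach_abs_le f (hconn i i0)
    have h2 := le_abs_self (f i - f i0)
    rw [← hS] at h1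
    linarith
  have step1 : ∑ i, f i * gk i ≤ ∑ i, (f i - m) * gk i := by
    have he : ∑ i, f i * gk i = ∑ i, (f i - m) * gk i + m * ∑ i, gk i := by
      rw [Finset.mul_sum, ← Finset.sum_add_distrib]
      exact Finset.sum_congr rfl fun i _ => by ring
    have hneg : m * ∑ i, gk i ≤ 0 := mul_nonpos_iff.mpr (Or.inl ⟨hf i0, hgsum⟩)
    linarith
  have step2 : ∑ i, (f i - m) * gk i ≤ ∑ i, (f i - m) * Kg := by
    refine Finset.sum_le_sum fun i _ => mul_le_mul_of_nonneg_left (hgk i) ?_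
    have := hmin i (Finset.mem_univ i)
    linarith
  have step3 : ∑ i, (f i - m) * Kg ≤ ((Fintype.card V : ℝ) * S) * Kg := by
    rw [← Finset.sum_mul]
    refine mul_le_mul_of_nonneg_right ?_ hKg0
    calc ∑ i, (f i - m) ≤ ∑ _i : V, S := Finset.sum_le_sum fun i _ => hfm i
    _ = (Fintype.card V : ℝ) * S := by
        rw [Finset.sum_const, Finset.card_univ, nsmul_eq_mul]
  have step4 : ((Fintype.card V : ℝ) * S) * Kg ≤ Kμ * S := by
    have h : ((Fintype.card V : ℝ) * S) * Kg = ((Fintype.card V : ℝ) * Kg) * S := by ring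
    rw [h]
    exact mul_le_mul_of_nonneg_right hK hS0
  have hDS : ∑ i, ∑ j, (if G.Adj i j then (1:ℝ) else 0) * |f i - f j| = 2 * S :=
    doubleSum_eq G f
  rw [hDS]
  have : Kμ * (1/2 * (2 * S)) = Kμ * S := by ring
  rw [this]
  linarith

theorem stmt4 {N q : ℕ} (G : SimpleGraph (Fin N)) [DecidableRel G.Adj] (hconn : G.Connected)
    (a : Fin N → Fin N → ℝ) (ha : ∀ i j, a i j = if G.Adj i j then 1 else 0)
    (g : Fin N → EuclideanSpace ℝ (Fin q)) (Kg : ℝ) (hg : ∀ i, ‖g i‖ ≤ Kg)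
    (hsum : ∀ k, ∑ i, g i k ≤ 0)
    (μ : Fin N → EuclideanSpace ℝ (Fin q)) (hμ : ∀ i k, 0 ≤ μ i k)
    (Kμ : ℝ) (hK : (N : ℝ) * Kg ≤ Kμ) :
    ∑ i, ⟪μ i, g i⟫ ≤ Kμ * ((1 / 2) * ∑ i, ∑ j, a i j * norm1 (μ i - μ j)) := by
  classical
  have hNe : Nonempty (Fin N) := hconn.nonempty
  have hKg0 : 0 ≤ Kg := le_trans (norm_nonneg _) (hg (Classical.arbitrary _))
  have hgk : ∀ i k, g i k ≤ Kg := by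
    intro i k
    refine le_trans (le_abs_self _) (le_trans ?_ (hg i))
    rw [EuclideanSpace.norm_eq]
    calc |g i k| = Real.sqrt ((g i k) ^ 2) := (Real.sqrt_sq_eq_abs _).symm
    _ ≤ Real.sqrt (∑ l, ‖g i l‖ ^ 2) := Real.sqrt_le_sqrt (by
        have := Finset.single_le_sum (f := fun l => ‖g i l‖ ^ 2)
          (fun l _ => sq_nonneg _) (Finset.mem_univ k)
        simpa [Real.norm_eq_abs, sq_abs] using this)
  have hL : ∑ i, ⟪μ i, g i⟫ = ∑ k, ∑ i, μ i k * g i k := by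
    have h1 : ∀ i : Fin N, ⟪μ i, g i⟫ = ∑ k, μ i k * g i k := fun i => by
      simp [PiLp.inner_apply, RCLike.inner_apply]
      exact Finset.sum_congr rfl fun k _ => mul_comm _ _
    rw [Finset.sum_congr rfl fun i _ => h1 i, Finset.sum_comm]
  have hR : ∑ i, ∑ j, a i j * norm1 (μ i - μ j)
      = ∑ k, ∑ i, ∑ j, (if G.Adj i j then (1:ℝ) else 0) * |μ i k - μ j k| := by
    have h1 : ∑ i, ∑ j, a i j * norm1 (μ i - μ j)
        = ∑ i, ∑ k, ∑ j, (if G.Adj i j then (1:ℝ) else 0) * |μ i k - μ j k| := by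
      refine Finset.sum_congr rfl fun i _ => ?_
      rw [Finset.sum_comm]
      refine Finset.sum_congr rfl fun j _ => ?_
      rw [ha, norm1, Finset.mul_sum]
      refine Finset.sum_congr rfl fun k _ => ?_
      simp [PiLp.sub_apply]
    rw [h1, Finset.sum_comm]
  rw [hL, hR]
  calc ∑ k, ∑ i, μ i k * g i k
      ≤ ∑ k : Fin q, Kμ * ((1/2) * ∑ i, ∑ j, (if G.Adj i j then (1:ℝ) else 0) * |μ i k - μ j k|) := by
        refine Finset.sum_le_sum fun k _ => ?_
        have := key_coord (V := Fin N) (Kμ := Kμ) hconn (fun i => μ i k) (fun i => g i k)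
          (fun i => hμ i k) (fun i => hgk i k) (hsum k) hKg0
          (by rwa [Fintype.card_fin])
        simpa using this
  _ = Kμ * (1 / 2 * ∑ k, ∑ i, ∑ j, (if G.Adj i j then (1:ℝ) else 0) * |μ i k - μ j k|) := by
        rw [← Finset.mul_sum, ← Finset.mul_sum]
end

section
/- Suppose e: [t₀, ∞) → R^q satisfies e(t₀) = 0 and ||e(t)|| ≤ δ(t - t₀) for all t ≥ t₀ with δ > 0, and suppose the triggering threshold function θ(t) = c₁ + c₂ e^{-ιt} with c₁ ≥ 0, c₂ > 0, ι > 0. Then the first time t* > t₀ at which ||e(t*)|| ≥ θ(t*) satisfies t* - t₀ > 0; specifically δ(t* - t₀) ≥ c₂ e^{-ιt*} > 0, so consecutive triggering times are separated by a strictly positive amount (no Zeno behavior). -/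
theorem stmt13_general {q : ℕ} (e : ℝ → EuclideanSpace ℝ (Fin q)) (t0 δ c1 c2 ι tstar : ℝ)
    (hc1 : 0 ≤ c1) (hc2 : 0 < c2)
    (hbound : ∀ t, t0 ≤ t → ‖e t‖ ≤ δ * (t - t0))
    (ht : t0 ≤ tstar) (htrig : c1 + c2 * Real.exp (-ι * tstar) ≤ ‖e tstar‖) :
    c2 * Real.exp (-ι * tstar) ≤ δ * (tstar - t0) ∧
      0 < c2 * Real.exp (-ι * tstar) ∧ t0 < tstar := by
  have hpos : 0 < c2 * Real.exp (-ι * tstar) := mul_pos hc2 (Real.exp_pos _)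
  have hgap : c2 * Real.exp (-ι * tstar) ≤ δ * (tstar - t0) := by
    linarith [hbound tstar ht]
  refine ⟨hgap, hpos, ht.lt_of_ne ?_⟩
  rintro rfl
  rw [sub_self, mul_zero] at hgap
  linarith

theorem stmt13 {q : ℕ} (e : ℝ → EuclideanSpace ℝ (Fin q)) (t0 δ c1 c2 ι tstar : ℝ)
    (hδ : 0 < δ) (hc1 : 0 ≤ c1) (hc2 : 0 < c2) (hι : 0 < ι)
    (he0 : e t0 = 0) (hbound : ∀ t, t0 ≤ t → ‖e t‖ ≤ δ * (t - t0))
    (ht : t0 ≤ tstar) (htrig : c1 + c2 * Real.exp (-ι * tstar) ≤ ‖e tstar‖) :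
    c2 * Real.exp (-ι * tstar) ≤ δ * (tstar - t0) ∧
      0 < c2 * Real.exp (-ι * tstar) ∧ t0 < tstar :=
  stmt13_general e t0 δ c1 c2 ι tstar hc1 hc2 hbound ht htrig
end
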